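/- arXiv:2103.03340 — 11 statements merged into one kernel-verified Lean document; each statement's English description precedes it below -/
import Mathlib

section
/- Fix an integer n ≥ 1 and let g̃₊, g̃₋, σ, F̃ be as defined. Then F̃ has no critical points in the region where F̃ ≥ 0: for every (s, t) ∈ ℝ², if ∂F̃/∂s(s,t) = 0 and ∂F̃/∂t(s,t) = 0, then F̃(s,t) < 0. -/
/-- The twisted end function `g̃₊`: equal to `1` on `[0, π]` and to `cos (2s)` otherwise. -/
noncomputable def gTildePlus (s : ℝ) : ℝ :=
  if 0 ≤ s ∧ s ≤ Real.pi then 1 else Real.cos (2 * s)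

/-- The twisted end function `g̃₋`: equal to `1` on `[0, π/2]`, to `cos (4ns)` on `(π/2, π]`,
and to `cos (2s)` otherwise. -/
noncomputable def gTildeMinus (n : ℕ) (s : ℝ) : ℝ :=
  if 0 ≤ s ∧ s ≤ Real.pi / 2 then 1
  else if Real.pi / 2 < s ∧ s ≤ Real.pi then Real.cos (4 * n * s)
  else Real.cos (2 * s)

/-- The twisted interpolating function `F̃(s,t) = eᵗ·[(1 − σ(t))·g̃₋(s) + σ(t)·g̃₊(s)]`. -/
noncomputable def Ftilde (n : ℕ) (σ : ℝ → ℝ) (s t : ℝ) : ℝ :=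
  Real.exp t * ((1 - σ t) * gTildeMinus n s + σ t * gTildePlus s)
/-!
At a critical point, `∂ₜF̃ = F̃ + eᵗ σ'(t) (g̃₊ - g̃₋)(s) = 0`, and `σ' ≥ 0`, `g̃₋ ≤ g̃₊` give
`F̃ ≤ 0`. Equality is impossible: where `g̃₋ = g̃₊ = 1` (on `[0, π/2]` and at `π`) we have
`F̃ = eᵗ`; on `(π/2, π)` the condition `σ' > 0` on `{0 < σ < 1}` forces `σ(t) = 0`, so that
`F̃(·, t) = eᵗ cos (4ns)` near `s`; outside `[0, π]`, `F̃(·, t) = eᵗ cos (2s)`. A cosine and its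
derivative never vanish together.
-/

open Real Set Filter Topology

theorem deriv_const_mul_cos_ne_zero {f : ℝ → ℝ} {a k x : ℝ} (ha : a ≠ 0) (hk : k ≠ 0)
    (hf : f =ᶠ[𝓝 x] fun y => a * cos (k * y)) (hx : cos (k * x) = 0) : deriv f x ≠ 0 := by
  have hderiv : HasDerivAt (fun y => a * cos (k * y)) (a * (-sin (k * x) * k)) x :=
    ((hasDerivAt_cos (k * x)).comp x ((hasDerivAt_id x).const_mul k |>.congr_deriv
      (mul_one k))).const_mul a
  have hsin : sin (k * x) ≠ 0 := fun h => by simpa [h, hx] using sin_sq_add_cos_sq (k * x)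
  rw [hf.deriv_eq, hderiv.deriv]
  simp [ha, hk, hsin]

section gTilde

variable {n : ℕ} {s : ℝ}

theorem gTildePlus_of_mem_Icc (hs : s ∈ Icc 0 π) : gTildePlus s = 1 :=
  if_pos hs

theorem gTildePlus_of_notMem_Icc (hs : s ∉ Icc 0 π) : gTildePlus s = cos (2 * s) :=
  if_neg hs

theorem gTildeMinus_of_mem_Icc (hs : s ∈ Icc 0 (π / 2)) : gTildeMinus n s = 1 :=
  if_pos hs

theorem gTildeMinus_of_mem_Ioc (hs : s ∈ Ioc (π / 2) π) : gTildeMinus n s = cos (4 * n * s) := by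
  rw [gTildeMinus, if_neg fun h => hs.1.not_ge h.2]
  exact if_pos hs

theorem gTildeMinus_of_notMem_Icc (hs : s ∉ Icc 0 π) : gTildeMinus n s = cos (2 * s) := by
  have : s < 0 ∨ π < s := by
    by_contra h
    push Not at h
    exact hs h
  rw [gTildeMinus, if_neg, if_neg] <;> rintro ⟨h₁, h₂⟩ <;> rcases this with h | h <;>
    linarith [pi_pos]

theorem gTildeMinus_pi : gTildeMinus n π = 1 := by
  rw [gTildeMinus_of_mem_Ioc ⟨by linarith [pi_pos], le_rfl⟩]
  have h : 4 * n * π = (2 * n : ℕ) * (2 * π) := by push_cast; ring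
  rw [h, cos_nat_mul_two_pi]

theorem gTildeMinus_le_gTildePlus (n : ℕ) (s : ℝ) : gTildeMinus n s ≤ gTildePlus s := by
  by_cases hs : s ∈ Icc 0 π
  · rw [gTildePlus_of_mem_Icc hs]
    rcases le_or_gt s (π / 2) with h | h
    · rw [gTildeMinus_of_mem_Icc ⟨hs.1, h⟩]
    · rw [gTildeMinus_of_mem_Ioc ⟨h, hs.2⟩]
      exact cos_le_one _
  · rw [gTildePlus_of_notMem_Icc hs, gTildeMinus_of_notMem_Icc hs]

end gTilde

section Ftilde

variable {n : ℕ} {σ : ℝ → ℝ} {s t : ℝ}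

theorem hasDerivAt_Ftilde_snd (hσ : DifferentiableAt ℝ σ t) :
    HasDerivAt (fun t' => Ftilde n σ s t')
      (Ftilde n σ s t + exp t * (deriv σ t * (gTildePlus s - gTildeMinus n s))) t := by
  have hσ' := hσ.hasDerivAt
  have hweight : HasDerivAt (fun t' => (1 - σ t') * gTildeMinus n s + σ t' * gTildePlus s)
      (-deriv σ t * gTildeMinus n s + deriv σ t * gTildePlus s) t :=
    (((hσ'.const_sub 1).mul_const _).add (hσ'.mul_const _)).congr_deriv (by ring)
  refine ((hasDerivAt_exp t).mul hweight).congr_deriv ?_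
  rw [Ftilde]
  ring

theorem Ftilde_eq_exp (hminus : gTildeMinus n s = 1) (hplus : gTildePlus s = 1) :
    Ftilde n σ s t = exp t := by
  simp [Ftilde, hminus, hplus]

theorem Ftilde_eventuallyEq_of_notMem_Icc (hs : s ∉ Icc 0 π) :
    (fun s' => Ftilde n σ s' t) =ᶠ[𝓝 s] fun s' => exp t * cos (2 * s') := by
  filter_upwards [isClosed_Icc.isOpen_compl.mem_nhds hs] with s' hs'
  rw [Ftilde, gTildeMinus_of_notMem_Icc hs', gTildePlus_of_notMem_Icc hs']
  ring

theorem Ftilde_eventuallyEq_of_mem_Ioo (hs : s ∈ Ioo (π / 2) π) (hσt : σ t = 0) :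
    (fun s' => Ftilde n σ s' t) =ᶠ[𝓝 s] fun s' => exp t * cos (4 * n * s') := by
  filter_upwards [isOpen_Ioo.mem_nhds hs] with s' hs'
  rw [Ftilde, gTildeMinus_of_mem_Ioc (Ioo_subset_Ioc_self hs'), hσt]
  ring

theorem Ftilde_eq_of_deriv_snd_eq_zero (hσ : DifferentiableAt ℝ σ t)
    (ht : deriv (fun t' => Ftilde n σ s t') t = 0) :
    Ftilde n σ s t = -(exp t * (deriv σ t * (gTildePlus s - gTildeMinus n s))) := by
  linarith [(hasDerivAt_Ftilde_snd (n := n) (s := s) hσ).deriv.symm.trans ht]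

theorem sigma_eq_zero_of_Ftilde_eq_zero (hbd : 0 ≤ σ t ∧ σ t ≤ 1)
    (hpos : 0 < σ t → σ t < 1 → 0 < deriv σ t) (hplus : gTildePlus s = 1)
    (hF : Ftilde n σ s t = 0) (hgap : deriv σ t * (gTildePlus s - gTildeMinus n s) = 0) :
    σ t = 0 := by
  have hsum : (1 - σ t) * gTildeMinus n s + σ t = 0 := by
    simpa [Ftilde, hplus, (exp_pos t).ne'] using hF
  have hminus : gTildeMinus n s ≠ 1 := fun h => by simp [h] at hsum
  have hderiv : deriv σ t = 0 :=
    (mul_eq_zero.1 hgap).resolve_right (sub_ne_zero.2 (hplus ▸ hminus.symm))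
  by_contra hne
  rcases hbd.2.lt_or_eq with hlt | heq
  · exact (hpos (hbd.1.lt_of_ne' hne) hlt).ne' hderiv
  · simp [heq] at hsum

theorem Ftilde_nonpos_of_deriv_snd_eq_zero (hσ : DifferentiableAt ℝ σ t) (hmono : Monotone σ)
    (ht : deriv (fun t' => Ftilde n σ s t') t = 0) : Ftilde n σ s t ≤ 0 := by
  rw [Ftilde_eq_of_deriv_snd_eq_zero hσ ht]
  exact neg_nonpos.2 (mul_nonneg (exp_pos t).le
    (mul_nonneg hmono.deriv_nonneg (sub_nonneg.2 (gTildeMinus_le_gTildePlus n s))))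

theorem Ftilde_ne_zero_of_critical (hn : n ≠ 0) (hσ : DifferentiableAt ℝ σ t)
    (hbd : 0 ≤ σ t ∧ σ t ≤ 1) (hpos : 0 < σ t → σ t < 1 → 0 < deriv σ t)
    (hs : deriv (fun s' => Ftilde n σ s' t) s = 0)
    (ht : deriv (fun t' => Ftilde n σ s t') t = 0) : Ftilde n σ s t ≠ 0 := by
  intro hF
  have hexp := (exp_pos t).ne'
  have hgap : deriv σ t * (gTildePlus s - gTildeMinus n s) = 0 := by
    simpa [hF, hexp] using (Ftilde_eq_of_deriv_snd_eq_zero hσ ht).symm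
  by_cases hsπ : s ∈ Icc 0 π
  · rcases le_or_gt s (π / 2) with hle | hgt
    · rw [Ftilde_eq_exp (gTildeMinus_of_mem_Icc ⟨hsπ.1, hle⟩) (gTildePlus_of_mem_Icc hsπ)] at hF
      exact hexp hF
    rcases hsπ.2.lt_or_eq with hlt | rfl
    · have hev := Ftilde_eventuallyEq_of_mem_Ioo (n := n) ⟨hgt, hlt⟩
        (sigma_eq_zero_of_Ftilde_eq_zero hbd hpos (gTildePlus_of_mem_Icc hsπ) hF hgap)
      refine deriv_const_mul_cos_ne_zero hexp (by simpa using hn) hev ?_ hs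
      simpa [hexp] using hev.eq_of_nhds.symm.trans hF
    · rw [Ftilde_eq_exp gTildeMinus_pi (gTildePlus_of_mem_Icc hsπ)] at hF
      exact hexp hF
  · have hev := Ftilde_eventuallyEq_of_notMem_Icc (n := n) (σ := σ) (t := t) hsπ
    refine deriv_const_mul_cos_ne_zero hexp two_ne_zero hev ?_ hs
    simpa [hexp] using hev.eq_of_nhds.symm.trans hF

end Ftilde

/-- The twisted interpolating function `F̃` has no critical points in the region where
`F̃ ≥ 0`: if both partial derivatives of `F̃` vanish at `(s, t)`, then `F̃(s, t) < 0`. -/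
theorem Ftilde_neg_of_critical (n : ℕ) (hn : 1 ≤ n) (σ : ℝ → ℝ)
    (hσ : ContDiff ℝ 1 σ) (hmono : Monotone σ)
    (hbd : ∀ t, 0 ≤ σ t ∧ σ t ≤ 1)
    (hpos : ∀ t, 0 < σ t → σ t < 1 → 0 < deriv σ t)
    (s t : ℝ)
    (hs : deriv (fun s' => Ftilde n σ s' t) s = 0)
    (ht : deriv (fun t' => Ftilde n σ s t') t = 0) :
    Ftilde n σ s t < 0 := by
  have hσt := hσ.differentiable one_ne_zero t
  exact lt_of_le_of_ne (Ftilde_nonpos_of_deriv_snd_eq_zero hσt hmono ht)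
    (Ftilde_ne_zero_of_critical (by omega) hσt (hbd t) (hpos t) hs ht)
end

section
/- Let f : ℝ × ℝ → ℝ be twice continuously differentiable. Then the functions (t,s) ↦ e^{−t}·∂f/∂t(t,s) and (t,s) ↦ e^{−t}·∂f/∂s(t,s) are both independent of t (i.e., e^{−t}·∂f/∂t(t,s) = e^{−t′}·∂f/∂t(t′,s) and e^{−t}·∂f/∂s(t,s) = e^{−t′}·∂f/∂s(t′,s) for all t, t′, s ∈ ℝ) if and only if there exist a function g : ℝ → ℝ and a constant C ∈ ℝ such that f(t,s) = e^t·g(s) + C for all (t,s) ∈ ℝ². -/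
/-!
Invariance of the rescaled partials says `∂ₜf(t,s) = eᵗ ∂ₜf(0,s)` and `∂ₛf(t,s) = eᵗ ∂ₛf(0,s)`.
The second makes `f(t,·) - eᵗ f(0,·)` constant, so `f(t,s) = eᵗ f(0,s) + φ(t)` with
`φ(t) = f(t,0) - eᵗ f(0,0)`; the first, at `s = 0`, makes `f(·,0)` differ from a multiple of `exp`
by a constant, so `φ(t) = a (eᵗ - 1)`. Conversely, for `f = eᵗ g(s) + C` both rescaled partials
are independent of `t`: `deriv` commutes with multiplication by `eᵗ` even where `g` is not
differentiable.
-/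

open Real

theorem eq_exp_mul_of_exp_neg_mul_eq {u : ℝ → ℝ}
    (h : ∀ t t' : ℝ, exp (-t) * u t = exp (-t') * u t') (t : ℝ) : u t = exp t * u 0 := by
  have h0 := h t 0
  rwa [neg_zero, exp_zero, one_mul, exp_neg, inv_mul_eq_iff_eq_mul₀ (exp_ne_zero t)] at h0

theorem exp_neg_mul_exp_mul (t x : ℝ) : exp (-t) * (exp t * x) = x := by
  rw [exp_neg, inv_mul_cancel_left₀ (exp_ne_zero t)]

theorem eq_const_mul_add_of_deriv_eq_const_mul {u v : ℝ → ℝ} {c : ℝ}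
    (hu : Differentiable ℝ u) (hv : Differentiable ℝ v) (h : ∀ x, deriv u x = c * deriv v x)
    (x : ℝ) : u x = c * v x + (u 0 - c * v 0) := by
  have hconst : ∀ y, deriv (fun y => u y - c * v y) y = 0 := fun y => by
    rw [deriv_fun_sub (hu y) ((hv y).const_mul c), deriv_const_mul_field', h, sub_self]
  have := is_const_of_deriv_eq_zero (by fun_prop) hconst x 0
  linarith

theorem exists_eq_exp_mul_add_of_rescaled_partials_t_invariant {f : ℝ × ℝ → ℝ}
    (hdiff₀ : Differentiable ℝ (fun τ => f (τ, 0)))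
    (hdiff : ∀ t, Differentiable ℝ (fun σ => f (t, σ)))
    (hT : ∀ t t' s : ℝ, exp (-t) * deriv (fun τ => f (τ, s)) t =
      exp (-t') * deriv (fun τ => f (τ, s)) t')
    (hS : ∀ t t' s : ℝ, exp (-t) * deriv (fun σ => f (t, σ)) s =
      exp (-t') * deriv (fun σ => f (t', σ)) s) :
    ∃ (g : ℝ → ℝ) (C : ℝ), ∀ t s : ℝ, f (t, s) = exp t * g s + C := by
  set a := deriv (fun τ => f (τ, 0)) 0
  have hslice : ∀ t s, f (t, s) = exp t * f (0, s) + (f (t, 0) - exp t * f (0, 0)) :=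
    fun t => eq_const_mul_add_of_deriv_eq_const_mul (hdiff t) (hdiff 0) fun s =>
      eq_exp_mul_of_exp_neg_mul_eq (u := fun t => deriv (fun σ => f (t, σ)) s) (hS · · s) t
  have hbase : ∀ t, f (t, 0) = a * exp t + (f (0, 0) - a * exp 0) :=
    eq_const_mul_add_of_deriv_eq_const_mul hdiff₀ differentiable_exp fun t => by
      rw [Real.deriv_exp, mul_comm]
      exact eq_exp_mul_of_exp_neg_mul_eq (u := deriv (fun τ => f (τ, 0))) (hT · · 0) t
  refine ⟨fun s => f (0, s) - f (0, 0) + a, f (0, 0) - a, fun t s => ?_⟩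
  rw [hslice, hbase, exp_zero]
  ring

theorem rescaled_partials_t_invariant_of_eq_exp_mul_add {f : ℝ × ℝ → ℝ} {g : ℝ → ℝ} {C : ℝ}
    (hf : ∀ t s : ℝ, f (t, s) = exp t * g s + C) :
    (∀ t t' s : ℝ, exp (-t) * deriv (fun τ => f (τ, s)) t =
      exp (-t') * deriv (fun τ => f (τ, s)) t') ∧
    (∀ t t' s : ℝ, exp (-t) * deriv (fun σ => f (t, σ)) s =
      exp (-t') * deriv (fun σ => f (t', σ)) s) := by
  simp only [hf, deriv_add_const, deriv_mul_const_field', Real.deriv_exp, deriv_const_mul_field',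
    exp_neg_mul_exp_mul, implies_true, and_self]

/-- A twice continuously differentiable function `f(t, s)` has the property that
`e^(−t)·∂f/∂t(t,s)` and `e^(−t)·∂f/∂s(t,s)` are both independent of `t` if and only if
`f` is cylindrical, i.e. `f(t,s) = eᵗ·g(s) + C` for some `g : ℝ → ℝ` and constant `C`. -/
theorem cylindrical_iff_rescaled_partials_t_invariant (f : ℝ × ℝ → ℝ)
    (hf : ContDiff ℝ 2 f) :
    ((∀ t t' s : ℝ,
        Real.exp (-t) * deriv (fun τ => f (τ, s)) t =
          Real.exp (-t') * deriv (fun τ => f (τ, s)) t') ∧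
      (∀ t t' s : ℝ,
        Real.exp (-t) * deriv (fun σ => f (t, σ)) s =
          Real.exp (-t') * deriv (fun σ => f (t', σ)) s)) ↔
    ∃ (g : ℝ → ℝ) (C : ℝ), ∀ t s : ℝ, f (t, s) = Real.exp t * g s + C := by
  have hdf : Differentiable ℝ f := hf.differentiable (by norm_num)
  constructor
  · rintro ⟨hT, hS⟩
    exact exists_eq_exp_mul_add_of_rescaled_partials_t_invariant (by fun_prop)
      (fun _ => by fun_prop) hT hS
  · rintro ⟨g, C, hgC⟩
    exact rescaled_partials_t_invariant_of_eq_exp_mul_add hgC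
end

section
/- Let g : ℝ → ℝ be differentiable, C ∈ ℝ, and f(t,v,s,u) = eᵗ·g(s) + C, and suppose X : ℝ⁴ → ℝ⁴ satisfies (ω₁)_p(w, X(p)) = Df_p(w) for all p, w ∈ ℝ⁴. Then for every p = (t, v, s, u) ∈ ℝ⁴, eᵗ·(X(p)₂ − u·X(p)₃) − f(p) = −C; that is, the contraction ι_X(eᵗα) minus f is constantly equal to −C. -/
/-!
Pairing the Hamiltonian equation with the Liouville direction `∂ₜ = e₀` gives
`ω₁(∂ₜ, X) = eᵗ α(X)` on the left and `∂ₜ f = eᵗ g(s) = f − C` on the right: a cylindrical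
function is homogeneous in `eᵗ` up to its additive constant.
-/

/-- The symplectization form `ω₁ = d(eᵗ(dv − u ds))` at the point `p = (t, v, s, u)`,
as an alternating bilinear form on `ℝ⁴`. -/
noncomputable def omega1 (p x y : Fin 4 → ℝ) : ℝ :=
  Real.exp (p 0) *
    ((x 0 * y 1 - x 1 * y 0) - p 3 * (x 0 * y 2 - x 2 * y 0) - (x 3 * y 2 - x 2 * y 3))

lemma omega1_single_zero_left (p y : Fin 4 → ℝ) :
    omega1 p (Pi.single 0 1) y = Real.exp (p 0) * (y 1 - p 3 * y 2) := by
  simp [omega1]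

section Cylindrical

variable {ι : Type*} [Fintype ι]

lemma hasFDerivAt_exp_mul_comp {g : ℝ → ℝ} {i j : ι} {p : ι → ℝ}
    (hg : DifferentiableAt ℝ g (p j)) :
    HasFDerivAt (fun q : ι → ℝ => Real.exp (q i) * g (q j))
      (Real.exp (p i) • deriv g (p j) • ContinuousLinearMap.proj (R := ℝ) (φ := fun _ => ℝ) j
        + g (p j) • Real.exp (p i) • ContinuousLinearMap.proj (R := ℝ) (φ := fun _ => ℝ) i)
      p := by
  have hexp := (Real.hasDerivAt_exp (p i)).comp_hasFDerivAt p (hasFDerivAt_apply (𝕜 := ℝ) i p)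
  have hgj := hg.hasDerivAt.comp_hasFDerivAt p (hasFDerivAt_apply (𝕜 := ℝ) j p)
  exact hexp.mul hgj

lemma fderiv_exp_mul_comp_add_const_single [DecidableEq ι] {g : ℝ → ℝ} {i j : ι}
    {p : ι → ℝ} (C : ℝ) (hij : i ≠ j) (hg : DifferentiableAt ℝ g (p j)) :
    fderiv ℝ (fun q : ι → ℝ => Real.exp (q i) * g (q j) + C) p (Pi.single i 1)
      = Real.exp (p i) * g (p j) := by
  rw [((hasFDerivAt_exp_mul_comp hg).add_const C).fderiv]
  simp [hij.symm, mul_comm]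

end Cylindrical

/-- For the cylindrical function `f(t, v, s, u) = eᵗ·g(s) + C` and any Hamiltonian vector
field `X` for `f` with respect to `ω₁`, the contraction `ι_X(eᵗα)` minus `f` is constantly
equal to `−C`: for every `p = (t, v, s, u)`, `eᵗ·(X(p)₂ − u·X(p)₃) − f(p) = −C`. -/
theorem contraction_sub_cylindrical_eq_neg_const (g : ℝ → ℝ) (hg : Differentiable ℝ g)
    (C : ℝ) (f : (Fin 4 → ℝ) → ℝ)
    (hf : ∀ p : Fin 4 → ℝ, f p = Real.exp (p 0) * g (p 2) + C)
    (X : (Fin 4 → ℝ) → Fin 4 → ℝ)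
    (hX : ∀ p w : Fin 4 → ℝ, omega1 p w (X p) = fderiv ℝ f p w)
    (p : Fin 4 → ℝ) :
    Real.exp (p 0) * (X p 1 - p 3 * X p 2) - f p = -C := by
  have hliouville := hX p (Pi.single 0 1)
  rw [omega1_single_zero_left, funext hf,
    fderiv_exp_mul_comp_add_const_single C (by decide) (hg (p 2))] at hliouville
  rw [hliouville, hf]
  ring
end

section
/- Every handle sequence from a knot to a knot admits a full twist function f with f(Λ₊) = 1. -/
/-! Combinatorial handle sequences underlying decomposable Lagrangian cobordisms, and
twist functions on them. -/

/-- An isotopy move from level `A` to level `B`: a bijection of components. -/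
structure IsotopyMove (A B : Type) where
  e : A ≃ B

/-- A 0-handle move: a distinguished born component of `B`, together with a bijection
from `A` onto the complement of the born component. -/
structure ZeroHandleMove (A B : Type) where
  born : B
  e : A ≃ {x : B // x ≠ born}

/-- A ∧-handle move: two distinct base components of `A` are joined into a single result
component of `B`, together with a bijection between the remaining components. -/
structure WedgeMove (A B : Type) where
  base1 : A
  base2 : A
  base_ne : base1 ≠ base2
  result : B
  e : {a : A // a ≠ base1 ∧ a ≠ base2} ≃ {x : B // x ≠ result}

/-- A ∨-handle move: a base component of `A` is split into two distinct result components
of `B`, together with a bijection between the remaining components. -/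
structure VeeMove (A B : Type) where
  base : A
  result1 : B
  result2 : B
  result_ne : result1 ≠ result2
  e : {a : A // a ≠ base} ≃ {x : B // x ≠ result1 ∧ x ≠ result2}

/-- An elementary move between two consecutive levels of a handle sequence. -/
inductive Move (A B : Type) where
  | isotopy : IsotopyMove A B → Move A B
  | zero : ZeroHandleMove A B → Move A B
  | wedge : WedgeMove A B → Move A B
  | vee : VeeMove A B → Move A B

/-- The relation `R ⊆ A × B` determined by an elementary move. -/
def Move.rel {A B : Type} : Move A B → A → B → Prop
  | .isotopy m, a, b => m.e a = b
  | .zero m, a, b => (m.e a : B) = b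
  | .wedge m, a, b => ((a = m.base1 ∨ a = m.base2) ∧ b = m.result) ∨
      ∃ h : a ≠ m.base1 ∧ a ≠ m.base2, (m.e ⟨a, h⟩ : B) = b
  | .vee m, a, b => (a = m.base ∧ (b = m.result1 ∨ b = m.result2)) ∨
      ∃ h : a ≠ m.base, (m.e ⟨a, h⟩ : B) = b

/-- `Move.isIsotopy M` holds exactly when `M` is an isotopy move. -/
def Move.isIsotopy {A B : Type} : Move A B → Prop
  | .isotopy _ => True
  | _ => False

/-- `Move.isZeroHandle M` holds exactly when `M` is a 0-handle move. -/
def Move.isZeroHandle {A B : Type} : Move A B → Prop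
  | .zero _ => True
  | _ => False

/-- `Move.isWedge M` holds exactly when `M` is a ∧-handle move. -/
def Move.isWedge {A B : Type} : Move A B → Prop
  | .wedge _ => True
  | _ => False

/-- `Move.isVee M` holds exactly when `M` is a ∨-handle move. -/
def Move.isVee {A B : Type} : Move A B → Prop
  | .vee _ => True
  | _ => False

/-- Count (0 or 1) of 1-handles (∧- or ∨-handles) among a single move. -/
def Move.oneCount {A B : Type} : Move A B → ℕ
  | .wedge _ => 1
  | .vee _ => 1
  | _ => 0

/-- Count (0 or 1) of 0-handles among a single move. -/
def Move.zeroCount {A B : Type} : Move A B → ℕ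
  | .zero _ => 1
  | _ => 0

/-- Count (0 or 1) of ∧-handles among a single move. -/
def Move.wedgeCount {A B : Type} : Move A B → ℕ
  | .wedge _ => 1
  | _ => 0

/-- Count (0 or 1) of ∨-handles among a single move. -/
def Move.veeCount {A B : Type} : Move A B → ℕ
  | .vee _ => 1
  | _ => 0

/-- The value of `fB` on the born component if the move is a 0-handle, and `0` otherwise. -/
def Move.bornValue {A B : Type} (fB : B → ℚ) : Move A B → ℚ
  | .zero m => fB m.born
  | _ => 0

/-- A handle sequence of length `m`: finite sets of components `C 0, …, C m` connected by
elementary moves. -/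
structure HandleSequence where
  m : ℕ
  C : ℕ → Type
  finite : ∀ k, Finite (C k)
  move : (k : Fin m) → Move (C k.val) (C (k.val + 1))

/-- The conditions a twist function must satisfy across a single elementary move. -/
def MoveTwistOK {A B : Type} (fA : A → ℚ) (fB : B → ℚ) : Move A B → Prop
  | .isotopy m => ∀ a, fA a = fB (m.e a)
  | .zero m => 1 ≤ fB m.born ∧ ∀ a, fA a = fB (m.e a : B)
  | .wedge m => (1 / 2 : ℚ) ≤ fA m.base1 ∧ (1 / 2 : ℚ) ≤ fA m.base2 ∧
      fA m.base1 + fA m.base2 = fB m.result + 1 ∧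
      ∀ a (h : a ≠ m.base1 ∧ a ≠ m.base2), fA a = fB (m.e ⟨a, h⟩ : B)
  | .vee m => 1 ≤ fA m.base ∧ fA m.base = fB m.result1 + fB m.result2 + 1 ∧
      ∀ a (h : a ≠ m.base), fA a = fB (m.e ⟨a, h⟩ : B)

/-- A twist function on a handle sequence: a `½ℕ`-valued function on all components
satisfying the twist conditions across every elementary move. -/
def IsTwistFunction (H : HandleSequence) (f : ∀ k, H.C k → ℚ) : Prop :=
  (∀ k (x : H.C k), ∃ j : ℕ, f k x = (j : ℚ) / 2) ∧
    ∀ k : Fin H.m, MoveTwistOK (f k.val) (f (k.val + 1)) (H.move k)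

/-- A twist function is full if all its values are integers and its value on the base of
every ∨-handle is at least 2. -/
def IsFullTwist (H : HandleSequence) (f : ∀ k, H.C k → ℚ) : Prop :=
  (∀ k (x : H.C k), ∃ j : ℕ, f k x = (j : ℚ)) ∧
    ∀ (k : Fin H.m) (mv : VeeMove (H.C k.val) (H.C (k.val + 1))),
      H.move k = Move.vee mv → 2 ≤ f k.val mv.base

/-- A twist function is regular if its value on the born component of every 0-handle is 1. -/
def IsRegularTwist (H : HandleSequence) (f : ∀ k, H.C k → ℚ) : Prop :=
  ∀ (k : Fin H.m) (mv : ZeroHandleMove (H.C k.val) (H.C (k.val + 1))),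
    H.move k = Move.zero mv → f (k.val + 1) mv.born = 1

/-- `ReachesBottom H k x` holds when there is a downward vertical path in the handle sequence
from the component `x ∈ C k` to a component of `C 0`. -/
inductive ReachesBottom (H : HandleSequence) : (k : ℕ) → H.C k → Prop
  | base (x : H.C 0) : ReachesBottom H 0 x
  | step (k : Fin H.m) (x : H.C k.val) (y : H.C (k.val + 1)) :
      ReachesBottom H k.val x → (H.move k).rel x y → ReachesBottom H (k.val + 1) y

/-- Property A: the base of every ∨-handle admits a downward vertical path ending at the
bottom level `C 0`. -/
def PropertyA (H : HandleSequence) : Prop :=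
  ∀ (k : Fin H.m) (mv : VeeMove (H.C k.val) (H.C (k.val + 1))),
    H.move k = Move.vee mv → ReachesBottom H k.val mv.base


open scoped Classical

/-- Pull back a candidate twist function along an elementary move. -/
noncomputable def Move.pull {A B : Type} (M : Move A B) (fB : B → ℚ) : A → ℚ :=
  match M with
  | .isotopy m => fun a => fB (m.e a)
  | .zero m => fun a => fB (m.e a)
  | .wedge m => fun a =>
      if h1 : a = m.base1 then fB m.result
      else if h2 : a = m.base2 then 1
      else fB (m.e ⟨a, ⟨h1, h2⟩⟩)
  | .vee m => fun a =>
      if h : a = m.base then fB m.result1 + fB m.result2 + 1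
      else fB (m.e ⟨a, h⟩)

/-- The canonical twist function, defined by downward recursion from the top. -/
noncomputable def HandleSequence.tf (H : HandleSequence) : (k : ℕ) → H.C k → ℚ :=
  fun k =>
    if h : k < H.m then (H.move ⟨k, h⟩).pull (H.tf (k + 1)) else fun _ => 1
termination_by k => H.m - k
decreasing_by omega

theorem HandleSequence.tf_spec (H : HandleSequence) (k : ℕ) (x : H.C k) :
    ∃ j : ℕ, 1 ≤ j ∧ H.tf k x = (j : ℚ) := by
  rw [HandleSequence.tf]
  split
  · next h =>
    rcases hM : H.move ⟨k, h⟩ with m | m | m | m <;> simp only [Move.pull]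
    · exact H.tf_spec (k + 1) (m.e x)
    · exact H.tf_spec (k + 1) (m.e x)
    · by_cases h1 : x = m.base1
      · simp only [h1, dif_pos rfl]
        exact H.tf_spec (k + 1) m.result
      · by_cases h2 : x = m.base2
        · rw [dif_neg h1, dif_pos h2]
          exact ⟨1, le_refl 1, by norm_num⟩
        · simp only [dif_neg h1, dif_neg h2]
          exact H.tf_spec (k + 1) (m.e ⟨x, ⟨h1, h2⟩⟩)
    · by_cases hb : x = m.base
      · simp only [hb, dif_pos rfl]
        obtain ⟨j1, hj1, e1⟩ := H.tf_spec (k + 1) m.result1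
        obtain ⟨j2, hj2, e2⟩ := H.tf_spec (k + 1) m.result2
        exact ⟨j1 + j2 + 1, by omega, by rw [e1, e2]; push_cast; ring⟩
      · simp only [dif_neg hb]
        exact H.tf_spec (k + 1) (m.e ⟨x, hb⟩)
  · exact ⟨1, le_refl 1, by norm_num⟩
termination_by H.m - k
decreasing_by all_goals omega

theorem HandleSequence.tf_one_le (H : HandleSequence) (k : ℕ) (x : H.C k) :
    (1 : ℚ) ≤ H.tf k x := by
  obtain ⟨j, hj, e⟩ := H.tf_spec k x
  rw [e]; exact_mod_cast hj

theorem HandleSequence.tf_eq (H : HandleSequence) (k : ℕ) (h : k < H.m) :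
    H.tf k = (H.move ⟨k, h⟩).pull (H.tf (k + 1)) := by
  rw [HandleSequence.tf, dif_pos h]

theorem HandleSequence.tf_top (H : HandleSequence) (x : H.C H.m) : H.tf H.m x = 1 := by
  rw [HandleSequence.tf, dif_neg (lt_irrefl H.m)]

/-- Every handle sequence from a knot to a knot admits a full twist function `f` with
`f(Λ₊) = 1`. -/
theorem exists_full_twist_function (H : HandleSequence)
    (Λm : H.C 0) (hΛm : ∀ x : H.C 0, x = Λm)
    (Λp : H.C H.m) (hΛp : ∀ x : H.C H.m, x = Λp) :
    ∃ f : ∀ k, H.C k → ℚ, IsTwistFunction H f ∧ IsFullTwist H f ∧ f H.m Λp = 1 := by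
  refine ⟨H.tf, ⟨?_, ?_⟩, ⟨?_, ?_⟩, ?_⟩
  · intro k x
    obtain ⟨j, _, e⟩ := H.tf_spec k x
    exact ⟨2 * j, by rw [e]; push_cast; ring⟩
  · intro k
    have he : H.tf k.val = (H.move k).pull (H.tf (k.val + 1)) := H.tf_eq k.val k.isLt
    rcases hM : H.move k with m | m | m | m <;>
      rw [hM] at he <;> rw [he] <;> simp only [MoveTwistOK, Move.pull]
    · intro a; trivial
    · exact ⟨H.tf_one_le _ _, fun a => trivial⟩
    · have hne : m.base2 ≠ m.base1 := Ne.symm m.base_ne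
      refine ⟨?_, ?_, ?_, ?_⟩
      · rw [dif_pos trivial]
        linarith [H.tf_one_le (k.val + 1) m.result]
      · rw [dif_neg hne, dif_pos trivial]; norm_num
      · rw [dif_pos trivial, dif_neg hne, dif_pos trivial]
      · intro a h
        rw [dif_neg h.1, dif_neg h.2]
    · refine ⟨?_, ?_, ?_⟩
      · rw [dif_pos trivial]
        linarith [H.tf_one_le (k.val + 1) m.result1, H.tf_one_le (k.val + 1) m.result2]
      · rw [dif_pos trivial]
      · intro a h
        rw [dif_neg h]
  · intro k x
    obtain ⟨j, _, e⟩ := H.tf_spec k x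
    exact ⟨j, e⟩
  · intro k mv hmv
    have he : H.tf k.val = (H.move k).pull (H.tf (k.val + 1)) := H.tf_eq k.val k.isLt
    rw [hmv] at he
    rw [he]
    show 2 ≤ (Move.vee mv).pull (H.tf (k.val + 1)) mv.base
    simp only [Move.pull]
    rw [dif_pos trivial]
    linarith [H.tf_one_le (k.val + 1) mv.result1, H.tf_one_le (k.val + 1) mv.result2]
  · rw [H.tf_top Λp]
end

section
/- If a handle sequence from a knot to a knot satisfies Property A, then it admits a full and regular twist function f with f(Λ₊) = 1. -/
/-!
For every ∨-handle choose, by Property A, one downward vertical path from its base, and let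
`f x = 1 + 2 n(x)`, where `n(x)` counts the chosen paths through `x`. A path meets each level in
exactly one component, so across a bijective pair the count is unchanged, a born component
carries no path, the result of a ∧-handle carries the paths of both bases, and the base of a
∨-handle carries the paths of both results plus its own. These are exactly the additive twist
relations for `f`; all values are odd integers, and the top level, which no path reaches,
gets `f = 1`.
-/

lemma Move.isVee_iff {A B : Type} {M : Move A B} : M.isVee ↔ ∃ mv, M = .vee mv := by
  cases M <;> simp [Move.isVee]

namespace HandleSequence

structure VerticalPath (H : HandleSequence) (k : ℕ) where
  vertex : ∀ j, j ≤ k → H.C j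
  rel_vertex : ∀ (i : Fin H.m) (h : i.val + 1 ≤ k),
    (H.move i).rel (vertex i (Nat.le_of_succ_le h)) (vertex (i.val + 1) h)

variable {H : HandleSequence}

namespace VerticalPath

variable {k : ℕ}

def Passes (p : H.VerticalPath k) {j : ℕ} (x : H.C j) : Prop :=
  ∃ h : j ≤ k, p.vertex j h = x

def ofBottom (x : H.C 0) : H.VerticalPath 0 where
  vertex _ h := (Nat.le_zero.mp h).symm ▸ x
  rel_vertex _ h := absurd h (Nat.not_succ_le_zero _)

def snoc {i : Fin H.m} (p : H.VerticalPath i) (y : H.C (i.val + 1))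
    (hy : (H.move i).rel (p.vertex i le_rfl) y) : H.VerticalPath (i.val + 1) where
  vertex j h := if hj : j ≤ i then p.vertex j hj else (show i.val + 1 = j by omega) ▸ y
  rel_vertex i' h := by
    by_cases hi' : i'.val + 1 ≤ i
    · simpa only [dif_pos hi', dif_pos (Nat.le_of_succ_le hi')] using p.rel_vertex i' hi'
    · obtain rfl : i' = i := Fin.ext (by omega)
      simpa only [dif_pos le_rfl, dif_neg hi'] using hy

lemma snoc_vertex_top {i : Fin H.m} (p : H.VerticalPath i) (y : H.C (i.val + 1))
    (hy : (H.move i).rel (p.vertex i le_rfl) y) : (p.snoc y hy).vertex (i.val + 1) le_rfl = y := by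
  simp [snoc]

variable {p : H.VerticalPath k}

lemma passes_vertex (j : ℕ) (h : j ≤ k) : p.Passes (p.vertex j h) := ⟨h, rfl⟩

lemma Passes.le {j : ℕ} {x : H.C j} (h : p.Passes x) : j ≤ k := h.1

lemma Passes.unique {j : ℕ} {x x' : H.C j} (h : p.Passes x) (h' : p.Passes x') : x = x' := by
  obtain ⟨_, rfl⟩ := h
  obtain ⟨_, rfl⟩ := h'
  rfl

lemma Passes.exists_rel_pred {i : Fin H.m} {y : H.C (i.val + 1)} (h : p.Passes y) :
    ∃ x : H.C i, (H.move i).rel x y ∧ p.Passes x := by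
  obtain ⟨hk, rfl⟩ := h
  exact ⟨_, p.rel_vertex i hk, passes_vertex _ _⟩

lemma Passes.exists_rel_succ {i : Fin H.m} {x : H.C i} (h : p.Passes x) (hi : i.val < k) :
    ∃ y : H.C (i.val + 1), (H.move i).rel x y ∧ p.Passes y := by
  obtain ⟨_, rfl⟩ := h
  exact ⟨_, p.rel_vertex i hi, passes_vertex _ _⟩

end VerticalPath

lemma _root_.ReachesBottom.exists_verticalPath {k : ℕ} {x : H.C k} (h : ReachesBottom H k x) :
    ∃ p : H.VerticalPath k, p.vertex k le_rfl = x := by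
  induction h with
  | base x => exact ⟨.ofBottom x, rfl⟩
  | step i x y _ hxy ih =>
    obtain ⟨p, rfl⟩ := ih
    exact ⟨p.snoc y hxy, p.snoc_vertex_top y hxy⟩

abbrev VeeIndex (H : HandleSequence) : Type := {t : Fin H.m // (H.move t).isVee}

lemma VeeIndex.val_ne_of_not_isVee {i : Fin H.m} (t : H.VeeIndex) (hi : ¬ (H.move i).isVee) :
    t.1 ≠ i := by
  rintro rfl
  exact hi t.2

lemma exists_veePath (hA : PropertyA H) (t : H.VeeIndex) :
    ∃ p : H.VerticalPath t, ∀ mv, H.move t = .vee mv → p.vertex t le_rfl = mv.base := by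
  obtain ⟨mv, hmv⟩ := Move.isVee_iff.mp t.2
  obtain ⟨p, hp⟩ := (hA t mv hmv).exists_verticalPath
  refine ⟨p, fun mv' hmv' => ?_⟩
  cases hmv.symm.trans hmv'
  exact hp

noncomputable def veePath (hA : PropertyA H) (t : H.VeeIndex) : H.VerticalPath t :=
  (exists_veePath hA t).choose

lemma veePath_vertex_top (hA : PropertyA H) (t : H.VeeIndex)
    {mv : VeeMove (H.C t.1) (H.C (t.1.val + 1))} (hmv : H.move t = .vee mv) :
    (veePath hA t).vertex t le_rfl = mv.base :=
  (exists_veePath hA t).choose_spec mv hmv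

open Classical in
noncomputable def pathsThrough (hA : PropertyA H) {j : ℕ} (x : H.C j) : Finset H.VeeIndex :=
  {t | (veePath hA t).Passes x}

noncomputable def twist (hA : PropertyA H) (j : ℕ) (x : H.C j) : ℚ :=
  1 + 2 * (pathsThrough hA x).card

section pathsThrough

variable (hA : PropertyA H)

lemma mem_pathsThrough {j : ℕ} {x : H.C j} {t : H.VeeIndex} :
    t ∈ pathsThrough hA x ↔ (veePath hA t).Passes x := by
  simp [pathsThrough]

variable {hA}

lemma le_of_mem_pathsThrough {j : ℕ} {x : H.C j} {t : H.VeeIndex}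
    (h : t ∈ pathsThrough hA x) : j ≤ t.1 :=
  ((mem_pathsThrough hA).mp h).le

lemma disjoint_pathsThrough {j : ℕ} {x x' : H.C j} (hne : x ≠ x') :
    Disjoint (pathsThrough hA x) (pathsThrough hA x') :=
  Finset.disjoint_left.mpr fun _ h h' =>
    hne (((mem_pathsThrough hA).mp h).unique ((mem_pathsThrough hA).mp h'))

lemma exists_rel_pred_of_mem_pathsThrough {i : Fin H.m} {y : H.C (i.val + 1)}
    {t : H.VeeIndex} (h : t ∈ pathsThrough hA y) :
    ∃ x : H.C i, (H.move i).rel x y ∧ t ∈ pathsThrough hA x := by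
  simpa only [mem_pathsThrough] using ((mem_pathsThrough hA).mp h).exists_rel_pred

lemma exists_rel_succ_of_mem_pathsThrough {i : Fin H.m} {x : H.C i} {t : H.VeeIndex}
    (h : t ∈ pathsThrough hA x) (ht : t.1 ≠ i) :
    ∃ y : H.C (i.val + 1), (H.move i).rel x y ∧ t ∈ pathsThrough hA y := by
  have hlt : i.val < t.1 :=
    lt_of_le_of_ne (le_of_mem_pathsThrough h) (Fin.val_ne_of_ne ht.symm)
  simpa only [mem_pathsThrough] using ((mem_pathsThrough hA).mp h).exists_rel_succ hlt

lemma eq_base_of_mem_pathsThrough {t : H.VeeIndex} {x : H.C t.1} (h : t ∈ pathsThrough hA x)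
    {mv : VeeMove (H.C t.1) (H.C (t.1.val + 1))} (hmv : H.move t = .vee mv) : x = mv.base := by
  obtain ⟨_, rfl⟩ := (mem_pathsThrough hA).mp h
  exact veePath_vertex_top hA t hmv

lemma base_mem_pathsThrough {i : Fin H.m} {mv : VeeMove (H.C i) (H.C (i.val + 1))}
    (h : H.move i = .vee mv) : ⟨i, Move.isVee_iff.mpr ⟨mv, h⟩⟩ ∈ pathsThrough hA mv.base :=
  (mem_pathsThrough hA).mpr ⟨le_rfl, veePath_vertex_top hA ⟨i, _⟩ h⟩

lemma pathsThrough_eq_of_rel_unique {i : Fin H.m} {x : H.C i} {y : H.C (i.val + 1)}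
    (hpred : ∀ x', (H.move i).rel x' y → x' = x) (hsucc : ∀ y', (H.move i).rel x y' → y' = y)
    (hbase : ∀ mv, H.move i = .vee mv → x ≠ mv.base) :
    pathsThrough hA x = pathsThrough hA y := by
  ext t
  constructor
  · intro ht
    have hti : t.1 ≠ i := by
      rintro rfl
      obtain ⟨mv, hmv⟩ := Move.isVee_iff.mp t.2
      exact hbase mv hmv (eq_base_of_mem_pathsThrough ht hmv)
    obtain ⟨y', hy', hty'⟩ := exists_rel_succ_of_mem_pathsThrough ht hti
    rwa [← hsucc y' hy']
  · intro ht
    obtain ⟨x', hx', htx'⟩ := exists_rel_pred_of_mem_pathsThrough ht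
    rwa [← hpred x' hx']

lemma pathsThrough_born {i : Fin H.m} {mz : ZeroHandleMove (H.C i) (H.C (i.val + 1))}
    (h : H.move i = .zero mz) : pathsThrough hA mz.born = ∅ := by
  refine Finset.eq_empty_of_forall_notMem fun t ht => ?_
  obtain ⟨x, hx, -⟩ := exists_rel_pred_of_mem_pathsThrough ht
  rw [h] at hx
  exact (mz.e x).2 hx

lemma pathsThrough_wedge_result {i : Fin H.m} {mw : WedgeMove (H.C i) (H.C (i.val + 1))}
    (h : H.move i = .wedge mw) :
    pathsThrough hA mw.result = pathsThrough hA mw.base1 ∪ pathsThrough hA mw.base2 := by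
  ext t
  rw [Finset.mem_union]
  constructor
  · intro ht
    obtain ⟨x, hx, htx⟩ := exists_rel_pred_of_mem_pathsThrough ht
    rw [h] at hx
    rcases hx with ⟨rfl | rfl, -⟩ | ⟨hx, hx'⟩
    · exact .inl htx
    · exact .inr htx
    · exact absurd hx' (mw.e ⟨x, hx⟩).2
  · have hi : ¬ (H.move i).isVee := by simp [h, Move.isVee]
    rintro (ht | ht) <;>
    · obtain ⟨y, hy, hty⟩ :=
        exists_rel_succ_of_mem_pathsThrough ht (t.val_ne_of_not_isVee hi)
      rw [h] at hy
      rcases hy with ⟨-, rfl⟩ | ⟨hne, -⟩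
      · exact hty
      · simp at hne

lemma pathsThrough_vee_base {i : Fin H.m} {mv : VeeMove (H.C i) (H.C (i.val + 1))}
    (h : H.move i = .vee mv) :
    pathsThrough hA mv.base = insert ⟨i, Move.isVee_iff.mpr ⟨mv, h⟩⟩
      (pathsThrough hA mv.result1 ∪ pathsThrough hA mv.result2) := by
  ext t
  rw [Finset.mem_insert, Finset.mem_union]
  constructor
  · intro ht
    by_cases hti : t.1 = i
    · exact .inl (Subtype.ext hti)
    obtain ⟨y, hy, hty⟩ := exists_rel_succ_of_mem_pathsThrough ht hti
    rw [h] at hy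
    rcases hy with ⟨-, rfl | rfl⟩ | ⟨hne, -⟩
    · exact .inr (.inl hty)
    · exact .inr (.inr hty)
    · exact absurd rfl hne
  · rintro (rfl | ht | ht)
    · exact base_mem_pathsThrough h
    · obtain ⟨x, hx, htx⟩ := exists_rel_pred_of_mem_pathsThrough ht
      rw [h] at hx
      rcases hx with ⟨rfl, -⟩ | ⟨hx, hx'⟩
      exacts [htx, absurd hx' (mv.e ⟨x, hx⟩).2.1]
    · obtain ⟨x, hx, htx⟩ := exists_rel_pred_of_mem_pathsThrough ht
      rw [h] at hx
      rcases hx with ⟨rfl, -⟩ | ⟨hx, hx'⟩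
      exacts [htx, absurd hx' (mv.e ⟨x, hx⟩).2.2]

end pathsThrough

section twist

variable {hA : PropertyA H}

lemma one_le_twist {j : ℕ} (x : H.C j) : 1 ≤ twist hA j x := by
  unfold twist
  exact le_add_of_nonneg_right (by positivity)

lemma twist_eq_of_rel_unique {i : Fin H.m} {x : H.C i} {y : H.C (i.val + 1)}
    (hpred : ∀ x', (H.move i).rel x' y → x' = x) (hsucc : ∀ y', (H.move i).rel x y' → y' = y)
    (hbase : ∀ mv, H.move i = .vee mv → x ≠ mv.base) :
    twist hA i x = twist hA (i.val + 1) y := by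
  rw [twist, twist, pathsThrough_eq_of_rel_unique hpred hsucc hbase]

lemma twist_born {i : Fin H.m} {mz : ZeroHandleMove (H.C i) (H.C (i.val + 1))}
    (h : H.move i = .zero mz) : twist hA (i.val + 1) mz.born = 1 := by
  simp [twist, pathsThrough_born h]

lemma twist_wedge {i : Fin H.m} {mw : WedgeMove (H.C i) (H.C (i.val + 1))}
    (h : H.move i = .wedge mw) :
    twist hA i mw.base1 + twist hA i mw.base2 = twist hA (i.val + 1) mw.result + 1 := by
  simp only [twist, pathsThrough_wedge_result h,
    Finset.card_union_of_disjoint (disjoint_pathsThrough mw.base_ne)]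
  push_cast
  ring

lemma twist_vee {i : Fin H.m} {mv : VeeMove (H.C i) (H.C (i.val + 1))}
    (h : H.move i = .vee mv) :
    twist hA i mv.base =
      twist hA (i.val + 1) mv.result1 + twist hA (i.val + 1) mv.result2 + 1 := by
  -- the ∨-handle's own path stops at level `i`
  have hown : ⟨i, Move.isVee_iff.mpr ⟨mv, h⟩⟩ ∉
      pathsThrough hA mv.result1 ∪ pathsThrough hA mv.result2 := fun hmem => by
    rcases Finset.mem_union.mp hmem with hmem | hmem <;>
    exact Nat.not_succ_le_self i (le_of_mem_pathsThrough hmem)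
  simp only [twist, pathsThrough_vee_base h, Finset.card_insert_of_notMem hown,
    Finset.card_union_of_disjoint (disjoint_pathsThrough mv.result_ne)]
  push_cast
  ring

lemma three_le_twist_vee_base {i : Fin H.m} {mv : VeeMove (H.C i) (H.C (i.val + 1))}
    (h : H.move i = .vee mv) : 3 ≤ twist hA i mv.base := by
  rw [twist_vee h]
  linarith [one_le_twist (hA := hA) mv.result1, one_le_twist (hA := hA) mv.result2]

lemma twist_top (x : H.C H.m) : twist hA H.m x = 1 := by
  have hempty : pathsThrough hA x = ∅ :=
    Finset.eq_empty_of_forall_notMem fun t ht => (le_of_mem_pathsThrough ht).not_gt t.1.isLt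
  simp [twist, hempty]

lemma moveTwistOK_twist (i : Fin H.m) :
    MoveTwistOK (twist hA i) (twist hA (i.val + 1)) (H.move i) := by
  cases h : H.move i with
  | isotopy mi =>
    refine fun x => twist_eq_of_rel_unique ?_ ?_ ?_ <;> simp [h, Move.rel]
  | zero mz =>
    refine ⟨(twist_born h).ge, fun x => twist_eq_of_rel_unique ?_ ?_ ?_⟩ <;>
      simp [h, Move.rel, Subtype.coe_inj]
  | wedge mw =>
    refine ⟨by linarith [one_le_twist (hA := hA) mw.base1],
      by linarith [one_le_twist (hA := hA) mw.base2], twist_wedge h,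
      fun x hx => twist_eq_of_rel_unique ?_ ?_ ?_⟩ <;>
      simp [h, Move.rel, Subtype.coe_inj, hx, (mw.e ⟨x, hx⟩).2]
  | vee mv =>
    refine ⟨le_trans (by norm_num) (three_le_twist_vee_base h), twist_vee h,
      fun x hx => twist_eq_of_rel_unique ?_ ?_ ?_⟩ <;>
      simp [h, Move.rel, Subtype.coe_inj, hx, (mv.e ⟨x, hx⟩).2.1, (mv.e ⟨x, hx⟩).2.2]

lemma twist_eq_natCast {j : ℕ} (x : H.C j) :
    twist hA j x = ((1 + 2 * (pathsThrough hA x).card : ℕ) : ℚ) := by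
  simp [twist]

end twist

variable (hA : PropertyA H)

lemma isTwistFunction_twist : IsTwistFunction H (twist hA) := by
  refine ⟨fun j x => ⟨2 * (1 + 2 * (pathsThrough hA x).card), ?_⟩, moveTwistOK_twist⟩
  rw [twist_eq_natCast]
  push_cast
  ring

lemma isFullTwist_twist : IsFullTwist H (twist hA) :=
  ⟨fun _ x => ⟨_, twist_eq_natCast x⟩,
    fun _ _ h => le_trans (by norm_num) (three_le_twist_vee_base h)⟩

lemma isRegularTwist_twist : IsRegularTwist H (twist hA) :=
  fun _ _ h => twist_born h

end HandleSequence

theorem exists_full_regular_twist_function_of_propertyA_general (H : HandleSequence)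
    (Λp : H.C H.m)
    (hA : PropertyA H) :
    ∃ f : ∀ k, H.C k → ℚ,
      IsTwistFunction H f ∧ IsFullTwist H f ∧ IsRegularTwist H f ∧ f H.m Λp = 1 :=
  ⟨HandleSequence.twist hA, HandleSequence.isTwistFunction_twist hA,
    HandleSequence.isFullTwist_twist hA, HandleSequence.isRegularTwist_twist hA,
    HandleSequence.twist_top Λp⟩

/-- If a handle sequence from a knot to a knot satisfies Property A, then it admits a
full and regular twist function `f` with `f(Λ₊) = 1`. -/
theorem exists_full_regular_twist_function_of_propertyA (H : HandleSequence)
    (Λm : H.C 0) (hΛm : ∀ x : H.C 0, x = Λm)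
    (Λp : H.C H.m) (hΛp : ∀ x : H.C H.m, x = Λp)
    (hA : PropertyA H) :
    ∃ f : ∀ k, H.C k → ℚ,
      IsTwistFunction H f ∧ IsFullTwist H f ∧ IsRegularTwist H f ∧ f H.m Λp = 1 :=
  exists_full_regular_twist_function_of_propertyA_general H Λp hA
end

section
/- If a handle sequence from a knot to a knot admits a full and regular twist function, then it satisfies Property A. -/
/-- Key lemma: with a full regular twist function, every component that does not reach the
bottom level has twist value exactly `1`. -/
theorem twist_eq_one_of_not_reachesBottom (H : HandleSequence) (f : ∀ k, H.C k → ℚ)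
    (hf : IsTwistFunction H f) (hfull : IsFullTwist H f) (hreg : IsRegularTwist H f) :
    ∀ k : ℕ, k ≤ H.m → ∀ x : H.C k, ¬ ReachesBottom H k x → f k x = 1 := by
  intro k
  induction k with
  | zero => intro _ x hx; exact absurd (ReachesBottom.base x) hx
  | succ k ih =>
    intro hk x hx
    have hk' : k < H.m := hk
    have hkm : k ≤ H.m := le_of_lt hk'
    set kf : Fin H.m := ⟨k, hk'⟩ with hkf
    have htw := hf.2 kf
    have hstep : ∀ a : H.C k, (H.move kf).rel a x → ¬ ReachesBottom H k a := by
      intro a hrel ha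
      exact hx (ReachesBottom.step kf a x ha hrel)
    cases hM : H.move kf with
    | isotopy mv =>
      rw [hM] at htw hstep
      have h1 : ¬ ReachesBottom H k (mv.e.symm x) :=
        hstep (mv.e.symm x) (by simp [Move.rel])
      have h2 := htw (mv.e.symm x)
      rw [ih hkm _ h1] at h2
      simpa using h2.symm
    | zero mv =>
      rw [hM] at htw hstep
      by_cases h : x = mv.born
      · rw [h]; exact hreg kf mv hM
      · set a := mv.e.symm ⟨x, h⟩ with ha
        have hrel : (Move.zero mv).rel a x := by simp [Move.rel, ha]
        have h1 : ¬ ReachesBottom H k a := hstep a hrel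
        have h2 := htw.2 a
        rw [ih hkm _ h1] at h2
        have : (mv.e a : H.C (k + 1)) = x := by simp [ha]
        rw [this] at h2
        exact h2.symm
    | wedge mv =>
      rw [hM] at htw hstep
      obtain ⟨h1, h2, h3, h4⟩ := htw
      by_cases h : x = mv.result
      · subst h
        have hb1 : ¬ ReachesBottom H k mv.base1 :=
          hstep mv.base1 (Or.inl ⟨Or.inl rfl, rfl⟩)
        have hb2 : ¬ ReachesBottom H k mv.base2 :=
          hstep mv.base2 (Or.inl ⟨Or.inr rfl, rfl⟩)
        rw [ih hkm _ hb1, ih hkm _ hb2] at h3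
        linarith
      · set a := mv.e.symm ⟨x, h⟩ with ha
        have hcoe : (mv.e ⟨a.1, a.2⟩ : H.C (k + 1)) = x := by
          simp [ha]
        have hrel : (Move.wedge mv).rel a.1 x := Or.inr ⟨a.2, hcoe⟩
        have h1' : ¬ ReachesBottom H k a.1 := hstep a.1 hrel
        have h2' := h4 a.1 a.2
        rw [ih hkm _ h1', hcoe] at h2'
        exact h2'.symm
    | vee mv =>
      rw [hM] at htw hstep
      obtain ⟨h1, h2, h3⟩ := htw
      by_cases h : x = mv.result1 ∨ x = mv.result2
      · have hb : ¬ ReachesBottom H k mv.base := hstep mv.base (Or.inl ⟨rfl, h⟩)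
        have := ih hkm _ hb
        have h2le := hfull.2 kf mv hM
        rw [this] at h2le
        linarith
      · push_neg at h
        set a := mv.e.symm ⟨x, h⟩ with ha
        have hcoe : (mv.e ⟨a.1, a.2⟩ : H.C (k + 1)) = x := by
          simp [ha]
        have hrel : (Move.vee mv).rel a.1 x := Or.inr ⟨a.2, hcoe⟩
        have h1' : ¬ ReachesBottom H k a.1 := hstep a.1 hrel
        have h2' := h3 a.1 a.2
        rw [ih hkm _ h1', hcoe] at h2'
        exact h2'.symm

/-- If a handle sequence from a knot to a knot admits a full and regular twist function,
then it satisfies Property A. -/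
theorem propertyA_of_full_regular_twist_function (H : HandleSequence)
    (Λm : H.C 0) (hΛm : ∀ x : H.C 0, x = Λm)
    (Λp : H.C H.m) (hΛp : ∀ x : H.C H.m, x = Λp)
    (f : ∀ k, H.C k → ℚ)
    (hf : IsTwistFunction H f) (hfull : IsFullTwist H f) (hreg : IsRegularTwist H f) :
    PropertyA H := by
  intro k mv hmv
  by_contra hx
  have h1 := twist_eq_one_of_not_reachesBottom H f hf hfull hreg k.val (le_of_lt k.isLt)
    mv.base hx
  have h2 := hfull.2 k mv hmv
  linarith
end

section
/- Every handle sequence from a knot to a knot admits a twist function f with f(Λ₊) = ½; moreover, if the handle sequence satisfies Property A, then it admits a regular twist function f with f(Λ₊) = ½. -/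
/-! The twist function is built from the top down. Put `½` on `Λ₊` and pull it back across
the moves: copy values along the bijections, put `f c + f c' + 1` on the base of a ∨-handle,
and at a ∧-handle give the value of the result to one base and `1` to the other. All values
then lie in `½ℕ` and are at least `½`, so every condition holds except `f b ≥ 1` on born
components. A value below `1` travels down only along the relation, so if the ∧-handles always
pass it to a base with a downward path to `C₀`, it stays on components with such a path; `Λ₊`
is one of them, and a born component is not. Under Property A the same holds for every value
other than `1`, because the bases of the ∨-handles have such paths too, and the twist function
is regular. -/

namespace Move

variable {A B : Type}

theorem exists_rel (M : Move A B) (a : A) : ∃ b, M.rel a b := by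
  cases M with
  | isotopy m => exact ⟨m.e a, rfl⟩
  | zero m => exact ⟨m.e a, rfl⟩
  | wedge m =>
      by_cases h : a = m.base1 ∨ a = m.base2
      · exact ⟨m.result, Or.inl ⟨h, rfl⟩⟩
      · exact ⟨m.e ⟨a, not_or.mp h⟩, Or.inr ⟨not_or.mp h, rfl⟩⟩
  | vee m =>
      by_cases h : a = m.base
      · exact ⟨m.result1, Or.inl ⟨h, Or.inl rfl⟩⟩
      · exact ⟨m.e ⟨a, h⟩, Or.inr ⟨h, rfl⟩⟩

open Classical in
noncomputable def pullTwist (p : A → Prop) (g : B → ℚ) : Move A B → A → ℚ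
  | .isotopy m, a => g (m.e a)
  | .zero m, a => g (m.e a)
  | .wedge m, a =>
      if h₁ : a = m.base1 then (if p m.base1 then g m.result else 1)
      else if h₂ : a = m.base2 then (if p m.base1 then 1 else g m.result)
      else g (m.e ⟨a, h₁, h₂⟩)
  | .vee m, a => if h : a = m.base then g m.result1 + g m.result2 + 1 else g (m.e ⟨a, h⟩)

theorem moveTwistOK_pullTwist (M : Move A B) (p : A → Prop) {g : B → ℚ}
    (hg : ∀ y, 1 / 2 ≤ g y) (hborn : ∀ mZ, M = .zero mZ → 1 ≤ g mZ.born) :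
    MoveTwistOK (M.pullTwist p g) g M := by
  classical
  cases M with
  | isotopy m => exact fun a => rfl
  | zero m => exact ⟨hborn m rfl, fun a => rfl⟩
  | wedge m =>
      have h₁ : (wedge m).pullTwist p g m.base1 = if p m.base1 then g m.result else 1 := by
        simp [pullTwist]
      have h₂ : (wedge m).pullTwist p g m.base2 = if p m.base1 then 1 else g m.result := by
        simp [pullTwist, m.base_ne.symm]
      have hr := hg m.result
      refine ⟨?_, ?_, ?_, fun a h => by simp [pullTwist, h.1, h.2]⟩ <;>
        simp only [h₁, h₂] <;> split_ifs <;> linarith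
  | vee m =>
      refine ⟨?_, by simp [pullTwist], fun a h => by simp [pullTwist, h]⟩
      simp only [pullTwist, dite_true]
      linarith [hg m.result1, hg m.result2]

theorem pullTwist_mem {S : Set ℚ} (h₁ : 1 ∈ S) (hadd : ∀ a ∈ S, ∀ b ∈ S, a + b + 1 ∈ S)
    (M : Move A B) (p : A → Prop) {g : B → ℚ} (hg : ∀ y, g y ∈ S) (x : A) :
    M.pullTwist p g x ∈ S := by
  cases M with
  | isotopy m => exact hg _
  | zero m => exact hg _
  | wedge m =>
      simp only [pullTwist]
      split_ifs <;> first | exact h₁ | exact hg _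
  | vee m =>
      simp only [pullTwist]
      split_ifs
      exacts [hadd _ (hg _) _ (hg _), hg _]

theorem of_pullTwist_mem {T : Set ℚ} (hT : 1 ∉ T) (M : Move A B) {p : A → Prop}
    {q : B → Prop} (hpq : ∀ y, q y → ∃ x, M.rel x y ∧ p x) {g : B → ℚ}
    (hg : ∀ y, g y ∈ T → q y)
    (hvee : ∀ mV, M = .vee mV → g mV.result1 + g mV.result2 + 1 ∈ T → p mV.base)
    (x : A) (hx : M.pullTwist p g x ∈ T) : p x := by
  cases M with
  | isotopy m =>
      obtain ⟨x', hx', hp⟩ := hpq _ (hg _ hx)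
      rwa [m.e.injective hx'] at hp
  | zero m =>
      obtain ⟨x', hx', hp⟩ := hpq _ (hg _ hx)
      rwa [m.e.injective (Subtype.ext hx')] at hp
  | wedge m =>
      by_cases h₁ : x = m.base1
      · subst h₁
        by_contra hp
        exact hT (by simpa [pullTwist, hp] using hx)
      by_cases h₂ : x = m.base2
      · subst h₂
        by_cases hp : p m.base1
        · exact absurd (by simpa [pullTwist, m.base_ne.symm, hp] using hx) hT
        simp only [pullTwist, m.base_ne.symm, hp, dite_true, dite_false, if_false] at hx
        obtain ⟨x', ⟨hx'b | hx'b, -⟩ | ⟨_, hx'⟩, hp'⟩ := hpq _ (hg _ hx)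
        · exact absurd (hx'b ▸ hp') hp
        · exact hx'b ▸ hp'
        · exact absurd hx' (m.e _).prop
      simp only [pullTwist, h₁, h₂, dite_false] at hx
      obtain ⟨x', ⟨_, hx'⟩ | ⟨_, hx'⟩, hp⟩ := hpq _ (hg _ hx)
      · exact absurd hx' (m.e _).prop
      · exact Subtype.mk.inj (m.e.injective (Subtype.ext hx')) ▸ hp
  | vee m =>
      by_cases hb : x = m.base
      · subst hb
        exact hvee m rfl (by simpa [pullTwist] using hx)
      · simp only [pullTwist, hb, dite_false] at hx
        obtain ⟨x', hx' | ⟨hx'b, hx'⟩, hp⟩ := hpq _ (hg _ hx)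
        · rcases hx'.2 with h | h
          exacts [absurd h (m.e _).prop.1, absurd h (m.e _).prop.2]
        · exact Subtype.mk.inj (m.e.injective (Subtype.ext hx')) ▸ hp

end Move

theorem ReachesBottom.exists_rel {H : HandleSequence} {k : Fin H.m} {y : H.C (k.val + 1)}
    (hy : ReachesBottom H (k.val + 1) y) :
    ∃ x, (H.move k).rel x y ∧ ReachesBottom H k.val x := by
  suffices ∀ n (z : H.C n), ReachesBottom H n z → ∀ (k : Fin H.m) (hn : n = k.val + 1),
      ∃ x, (H.move k).rel x (hn ▸ z) ∧ ReachesBottom H k.val x from this _ _ hy k rfl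
  rintro n z (_ | ⟨k', x, z, hx, hxz⟩) k hn
  · cases hn
  · obtain rfl : k' = k := Fin.ext (Nat.succ_injective hn)
    exact ⟨x, hxz, hx⟩

namespace HandleSequence

variable (H : HandleSequence)

theorem exists_reachesBottom (x : H.C 0) (k : ℕ) (hk : k ≤ H.m) :
    ∃ y : H.C k, ReachesBottom H k y := by
  induction k with
  | zero => exact ⟨x, .base x⟩
  | succ k ih =>
      obtain ⟨y, hy⟩ := ih (Nat.le_of_succ_le hk)
      obtain ⟨z, hz⟩ := (H.move ⟨k, hk⟩).exists_rel y
      exact ⟨z, .step ⟨k, hk⟩ y z hy hz⟩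

theorem not_reachesBottom_born {k : Fin H.m}
    {mZ : ZeroHandleMove (H.C k.val) (H.C (k.val + 1))} (hm : H.move k = .zero mZ) :
    ¬ ReachesBottom H (k.val + 1) mZ.born := by
  intro h
  obtain ⟨x, hx, -⟩ := h.exists_rel
  rw [hm] at hx
  exact (mZ.e x).prop hx

noncomputable def topDownTwist (k : ℕ) : H.C k → ℚ :=
  if hk : k < H.m then
    (H.move ⟨k, hk⟩).pullTwist (ReachesBottom H k) (topDownTwist (k + 1))
  else fun _ => 1 / 2
termination_by H.m - k

theorem topDownTwist_of_lt (k : Fin H.m) :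
    H.topDownTwist k.val =
      (H.move k).pullTwist (ReachesBottom H k.val) (H.topDownTwist (k.val + 1)) := by
  rw [topDownTwist, dif_pos k.isLt]

theorem topDownTwist_of_le {k : ℕ} (hk : H.m ≤ k) : H.topDownTwist k = fun _ => 1 / 2 := by
  rw [topDownTwist, dif_neg (not_lt.mpr hk)]

theorem topDownTwist_mem {S : Set ℚ} (hhalf : 1 / 2 ∈ S) (h₁ : 1 ∈ S)
    (hadd : ∀ a ∈ S, ∀ b ∈ S, a + b + 1 ∈ S) (k : ℕ) (y : H.C k) :
    H.topDownTwist k y ∈ S := by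
  by_cases hk : k < H.m
  · rw [H.topDownTwist_of_lt ⟨k, hk⟩]
    exact Move.pullTwist_mem h₁ hadd _ _ (topDownTwist_mem hhalf h₁ hadd (k + 1)) y
  · rw [H.topDownTwist_of_le (not_lt.mp hk)]
    exact hhalf
termination_by H.m - k

theorem reachesBottom_of_topDownTwist_mem {T : Set ℚ} (hT : 1 ∉ T)
    (htop : ∀ y : H.C H.m, ReachesBottom H H.m y)
    (hvee : ∀ (k : Fin H.m) mV, H.move k = .vee mV →
      H.topDownTwist (k.val + 1) mV.result1 + H.topDownTwist (k.val + 1) mV.result2 + 1 ∈ T →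
        ReachesBottom H k.val mV.base)
    (k : ℕ) (hk : k ≤ H.m) (y : H.C k) (hy : H.topDownTwist k y ∈ T) :
    ReachesBottom H k y := by
  by_cases hlt : k < H.m
  · rw [H.topDownTwist_of_lt ⟨k, hlt⟩] at hy
    exact Move.of_pullTwist_mem hT _ (fun _ hz => ReachesBottom.exists_rel hz)
      (reachesBottom_of_topDownTwist_mem hT htop hvee (k + 1) hlt) (hvee ⟨k, hlt⟩) y hy
  · obtain rfl : k = H.m := le_antisymm hk (not_lt.mp hlt)
    exact htop y
termination_by H.m - k

theorem half_le_topDownTwist_and_exists_eq_half (k : ℕ) (y : H.C k) :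
    1 / 2 ≤ H.topDownTwist k y ∧ ∃ j : ℕ, H.topDownTwist k y = j / 2 := by
  refine H.topDownTwist_mem (S := {q | 1 / 2 ≤ q ∧ ∃ j : ℕ, q = j / 2})
    ⟨le_rfl, 1, by norm_num⟩ ⟨by norm_num, 2, by norm_num⟩ ?_ k y
  rintro _ ⟨ha, i, rfl⟩ _ ⟨hb, j, rfl⟩
  exact ⟨by linarith, i + j + 2, by push_cast; ring⟩

variable {H}

theorem one_le_topDownTwist (htop : ∀ y : H.C H.m, ReachesBottom H H.m y) {k : ℕ}
    (hk : k ≤ H.m) {y : H.C k} (hy : ¬ ReachesBottom H k y) : 1 ≤ H.topDownTwist k y := by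
  by_contra hlt
  refine hy (H.reachesBottom_of_topDownTwist_mem (T := Set.Iio 1) (by simp) htop
    (fun k mV _ hvee => ?_) k hk y (not_le.mp hlt))
  have h₁ := (H.half_le_topDownTwist_and_exists_eq_half _ mV.result1).1
  have h₂ := (H.half_le_topDownTwist_and_exists_eq_half _ mV.result2).1
  rw [Set.mem_Iio] at hvee
  linarith

theorem topDownTwist_eq_one (htop : ∀ y : H.C H.m, ReachesBottom H H.m y) (hA : PropertyA H)
    {k : ℕ} (hk : k ≤ H.m) {y : H.C k} (hy : ¬ ReachesBottom H k y) :
    H.topDownTwist k y = 1 := by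
  by_contra hne
  exact hy (H.reachesBottom_of_topDownTwist_mem (T := {q | q ≠ 1}) (fun h => h rfl) htop
    (fun k mV hm _ => hA k mV hm) k hk y hne)

theorem isTwistFunction_topDownTwist (htop : ∀ y : H.C H.m, ReachesBottom H H.m y) :
    IsTwistFunction H H.topDownTwist := by
  refine ⟨fun k y => (H.half_le_topDownTwist_and_exists_eq_half k y).2, fun k => ?_⟩
  rw [H.topDownTwist_of_lt k]
  exact Move.moveTwistOK_pullTwist _ _
    (fun y => (H.half_le_topDownTwist_and_exists_eq_half _ y).1)
    (fun _ hm => one_le_topDownTwist htop k.isLt (H.not_reachesBottom_born hm))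

theorem isRegularTwist_topDownTwist (htop : ∀ y : H.C H.m, ReachesBottom H H.m y)
    (hA : PropertyA H) : IsRegularTwist H H.topDownTwist :=
  fun k _ hm => topDownTwist_eq_one htop hA k.isLt (H.not_reachesBottom_born hm)

end HandleSequence

theorem exists_half_twist_function_general (H : HandleSequence)
    (Λm : H.C 0)
    (Λp : H.C H.m) (hΛp : ∀ x : H.C H.m, x = Λp) :
    (∃ f : ∀ k, H.C k → ℚ, IsTwistFunction H f ∧ f H.m Λp = 1 / 2) ∧
      (PropertyA H →
        ∃ f : ∀ k, H.C k → ℚ,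
          IsTwistFunction H f ∧ IsRegularTwist H f ∧ f H.m Λp = 1 / 2) := by
  have htop : ∀ y : H.C H.m, ReachesBottom H H.m y := by
    obtain ⟨y, hy⟩ := H.exists_reachesBottom Λm H.m le_rfl
    intro z
    rwa [hΛp z, ← hΛp y]
  have hvalue : H.topDownTwist H.m Λp = 1 / 2 := by rw [H.topDownTwist_of_le le_rfl]
  exact ⟨⟨_, H.isTwistFunction_topDownTwist htop, hvalue⟩,
    fun hA => ⟨_, H.isTwistFunction_topDownTwist htop, H.isRegularTwist_topDownTwist htop hA,
      hvalue⟩⟩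

/-- Every handle sequence from a knot to a knot admits a twist function `f` with
`f(Λ₊) = ½`; moreover, if the handle sequence satisfies Property A, then it admits a
regular twist function `f` with `f(Λ₊) = ½`. -/
theorem exists_half_twist_function (H : HandleSequence)
    (Λm : H.C 0) (hΛm : ∀ x : H.C 0, x = Λm)
    (Λp : H.C H.m) (hΛp : ∀ x : H.C H.m, x = Λp) :
    (∃ f : ∀ k, H.C k → ℚ, IsTwistFunction H f ∧ f H.m Λp = 1 / 2) ∧
      (PropertyA H →
        ∃ f : ∀ k, H.C k → ℚ,
          IsTwistFunction H f ∧ IsRegularTwist H f ∧ f H.m Λp = 1 / 2) :=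
  exists_half_twist_function_general H Λm Λp hΛp
end

section
/- For every twist function f on a handle sequence from a knot to a knot, f(Λ₊) = f(Λ₋) − (number of 1-handles) + Σ (over all 0-handles) f(b_k). In particular, if f is regular, then f(Λ₋) = f(Λ₊) + (number of 1-handles) − (number of 0-handles). -/
lemma sum_split_one {A : Type} [Fintype A] [DecidableEq A] (a : A) (f : A → ℚ) :
    ∑ x, f x = f a + ∑ x : {x // x ≠ a}, f x := by
  rw [← Finset.sum_subtype (Finset.univ.erase a) (by simp) f,
    Finset.add_sum_erase _ f (Finset.mem_univ a)]

lemma sum_split_two {A : Type} [Fintype A] [DecidableEq A] (a b : A) (hab : a ≠ b) (f : A → ℚ) :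
    ∑ x, f x = f a + f b + ∑ x : {x // x ≠ a ∧ x ≠ b}, f x := by
  rw [← Finset.sum_subtype ((Finset.univ.erase b).erase a)
    (by intro x; simp [and_comm]) f, add_assoc, Finset.erase_right_comm,
    Finset.add_sum_erase _ f (by simp [Ne.symm hab]),
    Finset.add_sum_erase _ f (Finset.mem_univ a)]

/-- Across one move, the total twist changes by `bornValue - oneCount`. -/
lemma move_sum_step {A B : Type} [Fintype A] [Fintype B] (fA : A → ℚ) (fB : B → ℚ)
    (M : Move A B) (h : MoveTwistOK fA fB M) :
    ∑ x, fB x = ∑ x, fA x - (M.oneCount : ℚ) + M.bornValue fB := by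
  classical
  cases M with
  | isotopy m =>
    simp only [Move.oneCount, Move.bornValue, Nat.cast_zero]
    rw [Fintype.sum_equiv m.e fA fB (fun a => h a)]; ring
  | zero m =>
    obtain ⟨h1, h2⟩ := h
    simp only [Move.oneCount, Move.bornValue, Nat.cast_zero]
    rw [sum_split_one m.born fB, Fintype.sum_equiv m.e fA (fun x => fB x) (fun a => h2 a)]
    ring
  | wedge m =>
    obtain ⟨h1, h2, h3, h4⟩ := h
    simp only [Move.oneCount, Move.bornValue, Nat.cast_one]
    rw [sum_split_one m.result fB,
      sum_split_two m.base1 m.base2 m.base_ne fA,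
      Fintype.sum_equiv m.e (fun a : {a : A // a ≠ m.base1 ∧ a ≠ m.base2} => fA a)
        (fun x : {x : B // x ≠ m.result} => fB x) (fun a => h4 a a.2)]
    linarith
  | vee m =>
    obtain ⟨h1, h2, h3⟩ := h
    simp only [Move.oneCount, Move.bornValue, Nat.cast_one]
    rw [sum_split_two m.result1 m.result2 m.result_ne fB,
      sum_split_one m.base fA,
      Fintype.sum_equiv m.e (fun a : {a : A // a ≠ m.base} => fA a)
        (fun x : {x : B // x ≠ m.result1 ∧ x ≠ m.result2} => fB x) (fun a => h3 a a.2)]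
    linarith

/-- For every twist function `f` on a handle sequence from a knot to a knot,
`f(Λ₊) = f(Λ₋) − (number of 1-handles) + Σ_{0-handles} f(bₖ)`.  In particular, if `f` is
regular, then `f(Λ₋) = f(Λ₊) + (number of 1-handles) − (number of 0-handles)`. -/
theorem twist_function_end_values (H : HandleSequence)
    (Λm : H.C 0) (hΛm : ∀ x : H.C 0, x = Λm)
    (Λp : H.C H.m) (hΛp : ∀ x : H.C H.m, x = Λp)
    (f : ∀ k, H.C k → ℚ) (hf : IsTwistFunction H f) :
    f H.m Λp = f 0 Λm - (∑ k : Fin H.m, ((H.move k).oneCount : ℚ)) +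
        ∑ k : Fin H.m, (H.move k).bornValue (f (k.val + 1)) ∧
      (IsRegularTwist H f →
        f 0 Λm = f H.m Λp + (∑ k : Fin H.m, ((H.move k).oneCount : ℚ)) -
          ∑ k : Fin H.m, ((H.move k).zeroCount : ℚ)) := by

  classical
  have hfin : ∀ k, Fintype (H.C k) := fun k => @Fintype.ofFinite _ (H.finite k)
  -- total twist at each level
  let S : ℕ → ℚ := fun k => @Finset.sum _ _ _ (@Finset.univ _ (hfin k)) (f k)
  -- extended step functions
  let g1 : ℕ → ℚ := fun k => if h : k < H.m then ((H.move ⟨k, h⟩).oneCount : ℚ) else 0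
  let g2 : ℕ → ℚ := fun k => if h : k < H.m then (H.move ⟨k, h⟩).bornValue (f (k + 1)) else 0
  let g3 : ℕ → ℚ := fun k => if h : k < H.m then ((H.move ⟨k, h⟩).zeroCount : ℚ) else 0
  have key : ∀ n, n ≤ H.m →
      S n = S 0 - (∑ k ∈ Finset.range n, g1 k) + ∑ k ∈ Finset.range n, g2 k := by
    intro n hn
    induction n with
    | zero => simp
    | succ n ih =>
      have hnm : n < H.m := hn
      have step := move_sum_step (A := H.C n) (B := H.C (n + 1))
        (fA := f n) (fB := f (n + 1)) (M := H.move ⟨n, hnm⟩) (hf.2 ⟨n, hnm⟩)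
      have : S (n + 1) = S n - g1 n + g2 n := by
        simpa [S, g1, g2, hnm] using step
      rw [this, ih (le_of_lt hnm), Finset.sum_range_succ, Finset.sum_range_succ]
      ring
  have hsum1 : (∑ k : Fin H.m, ((H.move k).oneCount : ℚ)) = ∑ k ∈ Finset.range H.m, g1 k := by
    rw [← Fin.sum_univ_eq_sum_range]
    exact Finset.sum_congr rfl (fun k _ => by simp [g1, k.2])
  have hsum2 : (∑ k : Fin H.m, (H.move k).bornValue (f (k.val + 1)))
      = ∑ k ∈ Finset.range H.m, g2 k := by
    rw [← Fin.sum_univ_eq_sum_range]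
    exact Finset.sum_congr rfl (fun k _ => by simp [g2, k.2])
  have hS0 : S 0 = f 0 Λm := by
    have : (@Finset.univ _ (hfin 0)) = {Λm} := by
      ext x; simp [hΛm x]
    simp [S, this]
  have hSm : S H.m = f H.m Λp := by
    have : (@Finset.univ _ (hfin H.m)) = {Λp} := by
      ext x; simp [hΛp x]
    simp [S, this]
  have main : f H.m Λp = f 0 Λm - (∑ k : Fin H.m, ((H.move k).oneCount : ℚ)) +
      ∑ k : Fin H.m, (H.move k).bornValue (f (k.val + 1)) := by
    rw [hsum1, hsum2, ← hS0, ← hSm]; exact key H.m le_rfl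
  refine ⟨main, fun hreg => ?_⟩
  have hb : ∀ k : Fin H.m, (H.move k).bornValue (f (k.val + 1)) = ((H.move k).zeroCount : ℚ) := by
    intro k
    cases hM : H.move k with
    | zero mv =>
      simp only [Move.bornValue, Move.zeroCount, Nat.cast_one]
      exact hreg k mv hM
    | isotopy mv => simp [Move.bornValue, Move.zeroCount]
    | wedge mv => simp [Move.bornValue, Move.zeroCount]
    | vee mv => simp [Move.bornValue, Move.zeroCount]
  rw [Finset.sum_congr rfl (fun k _ => hb k)] at main
  linarith [main]
end

section
/- If a handle sequence from a knot to a knot contains at least one move that is not an isotopy (i.e., at least one 0-handle or 1-handle), then it contains at least one ∧-handle; moreover, in this case every full twist function f on it satisfies f(Λ₊) ≥ 1. -/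
/-- If a handle sequence from a knot to a knot contains at least one move that is not an
isotopy, then it contains at least one ∧-handle; moreover, in this case every full twist
function `f` on it satisfies `f(Λ₊) ≥ 1`. -/
theorem exists_wedge_and_full_twist_ge_one (H : HandleSequence)
    (Λm : H.C 0) (hΛm : ∀ x : H.C 0, x = Λm)
    (Λp : H.C H.m) (hΛp : ∀ x : H.C H.m, x = Λp)
    (hne : ∃ k : Fin H.m, ¬ (H.move k).isIsotopy) :
    (∃ k : Fin H.m, (H.move k).isWedge) ∧
      ∀ f : ∀ k, H.C k → ℚ,
        IsTwistFunction H f → IsFullTwist H f → 1 ≤ f H.m Λp := by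
  classical
  obtain ⟨k₁, hk₁⟩ := hne
  -- every level up to m is nonempty
  have hnonempty : ∀ n, n ≤ H.m → Nonempty (H.C n) := by
    intro n
    induction n with
    | zero => intro _; exact ⟨Λm⟩
    | succ n ih =>
      intro hn
      have hlt : n < H.m := hn
      obtain ⟨x⟩ := ih (le_of_lt hlt)
      rcases hmv : H.move ⟨n, hlt⟩ with mv | mv | mv | mv
      · exact ⟨mv.e x⟩
      · exact ⟨mv.born⟩
      · exact ⟨mv.result⟩
      · exact ⟨mv.result1⟩
  constructor
  · -- existence of a wedge
    by_contra hcon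
    push_neg at hcon
    have prop : ∀ n, n ≤ H.m → k₁.val < n → ∃ x y : H.C n, x ≠ y := by
      intro n
      induction n with
      | zero => intro _ h; omega
      | succ n ih =>
        intro hn hk
        have hnm : n < H.m := hn
        rcases hmv : H.move ⟨n, hnm⟩ with mv | mv | mv | mv
        · -- isotopy: either this is the non-isotopy move (contradiction) or use IH
          rcases Nat.lt_or_ge k₁.val n with hlt | hge
          · obtain ⟨x, y, hxy⟩ := ih (le_of_lt hnm) hlt
            exact ⟨mv.e x, mv.e y, fun h => hxy (mv.e.injective h)⟩
          · have hkn : (⟨n, hnm⟩ : Fin H.m) = k₁ := by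
              apply Fin.ext; show n = k₁.val; omega
            rw [← hkn] at hk₁
            rw [hmv] at hk₁
            exact absurd trivial hk₁
        · obtain ⟨a⟩ := hnonempty n (le_of_lt hnm)
          exact ⟨mv.born, mv.e a, fun h => (mv.e a).2 h.symm⟩
        · exact absurd (by rw [hmv]; trivial) (hcon ⟨n, hnm⟩)
        · exact ⟨mv.result1, mv.result2, mv.result_ne⟩
    obtain ⟨x, y, hxy⟩ := prop H.m le_rfl k₁.isLt
    exact hxy ((hΛp x).trans (hΛp y).symm)
  · intro f ⟨_, htwist⟩ ⟨hfull_int, hfull_vee⟩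
    -- values are nonnegative
    have hpos : ∀ k (x : H.C k), 0 ≤ f k x := by
      intro k x
      obtain ⟨j, hj⟩ := hfull_int k x
      rw [hj]; positivity
    -- a value that is at least 1/2 is at least 1
    have hhalf : ∀ k (x : H.C k), (1 / 2 : ℚ) ≤ f k x → 1 ≤ f k x := by
      intro k x h
      obtain ⟨j, hj⟩ := hfull_int k x
      rw [hj] at h ⊢
      rcases Nat.eq_zero_or_pos j with h0 | h1
      · rw [h0] at h; norm_num at h
      · exact_mod_cast h1
    -- a value that is positive is at least 1
    have hpos1 : ∀ k (x : H.C k), 0 < f k x → 1 ≤ f k x := by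
      intro k x h
      obtain ⟨j, hj⟩ := hfull_int k x
      rw [hj] at h ⊢
      rcases Nat.eq_zero_or_pos j with h0 | h1
      · rw [h0] at h; norm_num at h
      · exact_mod_cast h1
    have prop : ∀ n, n ≤ H.m → k₁.val < n → ∃ x : H.C n, 1 ≤ f n x := by
      intro n
      induction n with
      | zero => intro _ h; omega
      | succ n ih =>
        intro hn hk
        have hnm : n < H.m := hn
        have ht := htwist ⟨n, hnm⟩
        rcases hmv : H.move ⟨n, hnm⟩ with mv | mv | mv | mv <;> rw [hmv] at ht
        · rcases Nat.lt_or_ge k₁.val n with hlt | hge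
          · obtain ⟨x, hx⟩ := ih (le_of_lt hnm) hlt
            exact ⟨mv.e x, by rw [← ht x]; exact hx⟩
          · have hkn : (⟨n, hnm⟩ : Fin H.m) = k₁ := by
              apply Fin.ext; show n = k₁.val; omega
            rw [← hkn] at hk₁
            rw [hmv] at hk₁
            exact absurd trivial hk₁
        · exact ⟨mv.born, ht.1⟩
        · obtain ⟨h1, h2, h3, -⟩ := ht
          have hb1 := hhalf _ _ h1
          have hb2 := hhalf _ _ h2
          exact ⟨mv.result, by linarith⟩
        · obtain ⟨-, h2, -⟩ := ht
          have hbase := hfull_vee ⟨n, hnm⟩ mv hmv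
          by_cases hr1 : 1 ≤ f (n + 1) mv.result1
          · exact ⟨mv.result1, hr1⟩
          · refine ⟨mv.result2, hpos1 _ _ ?_⟩
            have := hpos (n + 1) mv.result1
            have h0 : f (n + 1) mv.result1 ≤ 0 := by
              by_contra hc
              push_neg at hc
              exact hr1 (hpos1 _ _ hc)
            linarith
    obtain ⟨x, hx⟩ := prop H.m le_rfl k₁.isLt
    rw [hΛp x] at hx
    exact hx
end

section
/- If a handle sequence from a knot to a knot contains at least one move that is not an isotopy (i.e., at least one 0-handle or 1-handle), then every twist function f on it satisfies f(Λ₋) ≥ ½; in particular f(Λ₋) > 0. -/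
/-- If a handle sequence from a knot to a knot contains at least one move that is not an
isotopy, then every twist function `f` on it satisfies `f(Λ₋) ≥ ½`; in particular
`f(Λ₋) > 0`. -/
theorem twist_function_bottom_ge_half (H : HandleSequence)
    (Λm : H.C 0) (hΛm : ∀ x : H.C 0, x = Λm)
    (Λp : H.C H.m) (hΛp : ∀ x : H.C H.m, x = Λp)
    (hne : ∃ k : Fin H.m, ¬ (H.move k).isIsotopy)
    (f : ∀ k, H.C k → ℚ) (hf : IsTwistFunction H f) :
    (1 / 2 : ℚ) ≤ f 0 Λm ∧ 0 < f 0 Λm := by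
  obtain ⟨hhalf, hmv⟩ := hf
  have hpos : (1 / 2 : ℚ) ≤ f 0 Λm := by
    by_contra hlt
    push_neg at hlt
    have h0 : f 0 Λm = 0 := by
      obtain ⟨j, hj⟩ := hhalf 0 Λm
      have hj1 : (j : ℚ) < 1 := by rw [hj] at hlt; linarith
      have : j = 0 := by exact_mod_cast Nat.lt_one_iff.mp (by exact_mod_cast hj1)
      rw [hj, this]; norm_num
    have key : ∀ j, j ≤ H.m →
        ((∀ k : Fin H.m, k.val < j → (H.move k).isIsotopy) ∧
          ∃ x : H.C j, (∀ y, y = x) ∧ f j x = 0) ∨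
        (∃ x y : H.C j, x ≠ y ∧ f j x = 0) := by
      intro j
      induction j with
      | zero =>
        intro _
        exact Or.inl ⟨fun k hk => absurd hk (Nat.not_lt_zero _), Λm, hΛm, h0⟩
      | succ j ih =>
        intro h
        have hj : j < H.m := h
        have IH := ih (le_of_lt hj)
        set kf : Fin H.m := ⟨j, hj⟩ with hkf
        have ok := hmv kf
        cases hM : H.move kf with
        | isotopy m =>
          rw [hM] at ok
          rcases IH with ⟨hiso, x, hx, hx0⟩ | ⟨x, y, hxy, hx0⟩
          · refine Or.inl ⟨?_, m.e x, ?_, ?_⟩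
            · intro k hk
              rcases Nat.lt_succ_iff_lt_or_eq.mp hk with hk' | hk'
              · exact hiso k hk'
              · have : k = kf := Fin.ext hk'
                rw [this, hM]; trivial
            · intro y
              have := hx (m.e.symm y)
              calc y = m.e (m.e.symm y) := (m.e.apply_symm_apply y).symm
                _ = m.e x := by rw [this]
            · rw [← ok x]; exact hx0
          · exact Or.inr ⟨m.e x, m.e y, fun hc => hxy (m.e.injective hc),
              by rw [← ok x]; exact hx0⟩
        | zero m =>
          rw [hM] at ok
          rcases IH with ⟨hiso, x, hx, hx0⟩ | ⟨x, y, hxy, hx0⟩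
          · exact Or.inr ⟨(m.e x : _), m.born, (m.e x).2, by rw [← ok.2 x]; exact hx0⟩
          · exact Or.inr ⟨(m.e x : _), (m.e y : _),
              fun hc => hxy (m.e.injective (Subtype.ext hc)),
              by rw [← ok.2 x]; exact hx0⟩
        | wedge m =>
          rw [hM] at ok
          rcases IH with ⟨hiso, x, hx, hx0⟩ | ⟨x, y, hxy, hx0⟩
          · exact absurd ((hx m.base1).trans (hx m.base2).symm) m.base_ne
          · have hb1 : x ≠ m.base1 := by
              intro hc; rw [hc] at hx0; have := ok.1; linarith
            have hb2 : x ≠ m.base2 := by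
              intro hc; rw [hc] at hx0; have := ok.2.1; linarith
            exact Or.inr ⟨(m.e ⟨x, hb1, hb2⟩ : _), m.result, (m.e ⟨x, hb1, hb2⟩).2,
              by rw [← ok.2.2.2 x ⟨hb1, hb2⟩]; exact hx0⟩
        | vee m =>
          rw [hM] at ok
          rcases IH with ⟨hiso, x, hx, hx0⟩ | ⟨x, y, hxy, hx0⟩
          · have hbx := hx m.base
            have h1 : (1 : ℚ) ≤ f j x := by rw [← hbx]; exact ok.1
            linarith
          · have hb : x ≠ m.base := by
              intro hc; rw [hc] at hx0; have := ok.1; linarith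
            exact Or.inr ⟨(m.e ⟨x, hb⟩ : _), m.result1, (m.e ⟨x, hb⟩).2.1,
              by rw [← ok.2.2 x hb]; exact hx0⟩
    rcases key H.m le_rfl with ⟨hiso, _⟩ | ⟨x, y, hxy, _⟩
    · obtain ⟨k, hk⟩ := hne
      exact hk (hiso k k.isLt)
    · exact hxy ((hΛp x).trans (hΛp y).symm)
  exact ⟨hpos, lt_of_lt_of_le (by norm_num) hpos⟩
end

section
/- If a handle sequence from a knot to a knot contains no 0-handles, then it admits a twist function f with f(Λ₊) = 0. -/
open scoped Classical

/-- Pull a twist assignment back across one move. -/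
noncomputable def pullTwist {A B : Type} (M : Move A B) (fB : B → ℚ) : A → ℚ :=
  match M with
  | .isotopy m => fun a => fB (m.e a)
  | .zero m => fun a => fB (m.e a)
  | .wedge m => fun a =>
      if h1 : a = m.base1 then fB m.result + 1/2
      else if h2 : a = m.base2 then 1/2
      else fB (m.e ⟨a, h1, h2⟩)
  | .vee m => fun a =>
      if h : a = m.base then fB m.result1 + fB m.result2 + 1
      else fB (m.e ⟨a, h⟩)

noncomputable def backTwist (H : HandleSequence) (k : ℕ) : H.C k → ℚ :=
  if h : k < H.m then pullTwist (H.move ⟨k, h⟩) (backTwist H (k + 1)) else fun _ => 0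
termination_by H.m - k
decreasing_by omega

theorem backTwist_half (H : HandleSequence) (k : ℕ) (x : H.C k) :
    ∃ j : ℕ, backTwist H k x = (j : ℚ) / 2 := by
  rw [backTwist]
  split
  · next h =>
    have IH : ∀ y : H.C (k + 1), ∃ j : ℕ, backTwist H (k + 1) y = (j : ℚ) / 2 :=
      backTwist_half H (k + 1)
    cases hM : H.move ⟨k, h⟩ with
    | isotopy m => exact IH _
    | zero m => exact IH _
    | wedge m =>
      show ∃ j : ℕ, (if h1 : x = m.base1 then _ else if h2 : x = m.base2 then _ else _) = _
      split
      · obtain ⟨j, hj⟩ := IH m.result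
        exact ⟨j + 1, by push_cast [hj]; ring⟩
      · split
        · exact ⟨1, by norm_num⟩
        · exact IH _
    | vee m =>
      show ∃ j : ℕ, (if h1 : x = m.base then _ else _) = _
      split
      · obtain ⟨j1, hj1⟩ := IH m.result1
        obtain ⟨j2, hj2⟩ := IH m.result2
        exact ⟨j1 + j2 + 2, by push_cast [hj1, hj2]; ring⟩
      · exact IH _
  · exact ⟨0, by norm_num⟩
termination_by H.m - k
decreasing_by omega

theorem backTwist_nonneg (H : HandleSequence) (k : ℕ) (x : H.C k) :
    0 ≤ backTwist H k x := by
  obtain ⟨j, hj⟩ := backTwist_half H k x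
  rw [hj]; positivity

/-- If a handle sequence from a knot to a knot contains no 0-handles, then it admits a
twist function `f` with `f(Λ₊) = 0`. -/
theorem exists_twist_function_top_zero_of_no_zero_handles (H : HandleSequence)
    (Λm : H.C 0) (hΛm : ∀ x : H.C 0, x = Λm)
    (Λp : H.C H.m) (hΛp : ∀ x : H.C H.m, x = Λp)
    (h0 : ∀ k : Fin H.m, ¬ (H.move k).isZeroHandle) :
    ∃ f : ∀ k, H.C k → ℚ, IsTwistFunction H f ∧ f H.m Λp = 0 := by
  refine ⟨fun k => backTwist H k, ⟨fun k x => backTwist_half H k x, ?_⟩, ?_⟩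
  · intro k
    have hk : k.val < H.m := k.isLt
    have hunf : backTwist H k.val = pullTwist (H.move k) (backTwist H (k.val + 1)) := by
      rw [backTwist]; rw [dif_pos hk]
    show MoveTwistOK (backTwist H k.val) (backTwist H (k.val + 1)) (H.move k)
    rw [hunf]
    cases hM : H.move k with
    | isotopy m => intro a; rfl
    | zero m => exact absurd (by rw [hM]; trivial) (h0 k)
    | wedge m =>
      simp only [hM, MoveTwistOK, pullTwist]
      refine ⟨?_, ?_, ?_, ?_⟩
      · rw [dif_pos trivial]
        have := backTwist_nonneg H (k.val + 1) m.result
        linarith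
      · rw [dif_neg (Ne.symm m.base_ne), dif_pos trivial]
      · rw [dif_pos trivial, dif_neg (Ne.symm m.base_ne), dif_pos trivial]; ring
      · intro a h
        rw [dif_neg h.1, dif_neg h.2]
    | vee m =>
      simp only [hM, MoveTwistOK, pullTwist]
      refine ⟨?_, ?_, ?_⟩
      · rw [dif_pos trivial]
        have h1 := backTwist_nonneg H (k.val + 1) m.result1
        have h2 := backTwist_nonneg H (k.val + 1) m.result2
        linarith
      · rw [dif_pos trivial]
      · intro a h; rw [dif_neg h]
  · show backTwist H H.m Λp = 0
    rw [backTwist, dif_neg (lt_irrefl H.m)]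
end
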